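/- arXiv:1410.5172 — 6 statements merged into one kernel-verified Lean document; each statement's English description precedes it below -/
import Mathlib

section
/- If a noetherian topological space that is irreducible is covered by countably many closed subsets Pₙ such that every point lies in some Pₙ, and the space cannot be written as a countable union of proper closed subsets, then some Pₙ equals the whole space. In particular, affine space over an uncountable field is not a countable union of proper closed subsets: if A^n over an uncountable algebraically closed field k is the union of countably many closed subsets containing all closed points, then one of them equals A^n. -/
/-- Over an uncountable field, countably many nonzero multivariate polynomials
have a common non-vanishing point. -/
lemma exists_eval_ne_zero_of_countable {k : Type*} [Field k] [Uncountable k] :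
    ∀ (n : ℕ) (f : ℕ → MvPolynomial (Fin n) k), (∀ N, f N ≠ 0) →
      ∃ a : Fin n → k, ∀ N, MvPolynomial.eval a (f N) ≠ 0 := by
  intro n
  induction n with
  | zero =>
    intro f hf
    refine ⟨finZeroElim, fun N => ?_⟩
    obtain ⟨c, hc⟩ := MvPolynomial.C_surjective (Fin 0) (f N)
    rw [← hc, MvPolynomial.eval_C]
    intro h
    exact hf N (by rw [← hc, h, map_zero])
  | succ n ih =>
    intro f hf
    set g : ℕ → Polynomial (MvPolynomial (Fin n) k) :=
      fun N => MvPolynomial.finSuccEquiv k n (f N) with hg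
    have hg0 : ∀ N, g N ≠ 0 := fun N h =>
      hf N ((map_eq_zero_iff _ (MvPolynomial.finSuccEquiv k n).injective).mp h)
    obtain ⟨a, ha⟩ := ih (fun N => (g N).leadingCoeff)
      (fun N => Polynomial.leadingCoeff_ne_zero.mpr (hg0 N))
    set h : ℕ → Polynomial k := fun N => (g N).map (MvPolynomial.eval a) with hh
    have hh0 : ∀ N, h N ≠ 0 := by
      intro N hzero
      apply ha N
      have heq : (h N).coeff (g N).natDegree
          = MvPolynomial.eval a ((g N).leadingCoeff) := by
        rw [hh]; simp only [Polynomial.coeff_map, Polynomial.leadingCoeff]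
      rw [hzero, Polynomial.coeff_zero] at heq
      exact heq.symm
    have hcnt : (⋃ N, {t : k | (h N).IsRoot t}).Countable :=
      Set.countable_iUnion fun N => (Polynomial.finite_setOf_isRoot (hh0 N)).countable
    have : (⋃ N, {t : k | (h N).IsRoot t}) ≠ Set.univ := by
      intro heq
      exact Set.not_countable_univ (heq ▸ hcnt)
    obtain ⟨t, ht⟩ : ∃ t : k, t ∉ ⋃ N, {t : k | (h N).IsRoot t} := by
      by_contra hcon
      push_neg at hcon
      exact this (Set.eq_univ_of_forall hcon)
    refine ⟨Fin.cons t a, fun N => ?_⟩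
    rw [MvPolynomial.eval_eq_eval_mv_eval']
    intro hroot
    exact ht (Set.mem_iUnion.mpr ⟨N, hroot⟩)

/-- Affine `n`-space over an uncountable algebraically closed field is not a
countable union of proper closed subsets: if countably many Zariski-closed
subsets of `𝔸ⁿ_k` together contain all closed points, then one of them is all
of `𝔸ⁿ_k`. -/
theorem closed_cover_of_affine_space_over_uncountable_field
    (k : Type*) [Field k] [IsAlgClosed k] [Uncountable k] (n : ℕ)
    (P : ℕ → Set (PrimeSpectrum (MvPolynomial (Fin n) k)))
    (hP : ∀ N, IsClosed (P N))
    (hcover : ∀ x : PrimeSpectrum (MvPolynomial (Fin n) k),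
      x.asIdeal.IsMaximal → x ∈ ⋃ N, P N) :
    ∃ N₀, P N₀ = Set.univ := by
  by_contra hcon
  push_neg at hcon
  -- choose ideals cutting out each `P N`
  have hI : ∀ N, ∃ I : Ideal (MvPolynomial (Fin n) k),
      P N = PrimeSpectrum.zeroLocus (I : Set (MvPolynomial (Fin n) k)) := fun N =>
    (PrimeSpectrum.isClosed_iff_zeroLocus_ideal (P N)).mp (hP N)
  choose I hIeq using hI
  -- each ideal is nonzero, so choose a nonzero element
  have hf : ∀ N, ∃ f : MvPolynomial (Fin n) k, f ∈ I N ∧ f ≠ 0 := by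
    intro N
    by_contra hc
    push_neg at hc
    have : I N = ⊥ := by
      ext x
      simp only [Ideal.mem_bot]
      exact ⟨fun hx => by by_contra hne; exact hne (hc x hx), fun hx => hx ▸ (I N).zero_mem⟩
    apply hcon N
    rw [hIeq N, this]
    exact PrimeSpectrum.zeroLocus_bot (R := MvPolynomial (Fin n) k)
  choose f hfI hf0 using hf
  -- find a common non-vanishing point
  obtain ⟨a, ha⟩ := exists_eval_ne_zero_of_countable n f hf0
  -- the maximal ideal of functions vanishing at `a`
  have hsurj : Function.Surjective (MvPolynomial.eval a) := fun c =>
    ⟨MvPolynomial.C c, MvPolynomial.eval_C c⟩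
  have hmax : (RingHom.ker (MvPolynomial.eval a :
      MvPolynomial (Fin n) k →+* k)).IsMaximal :=
    RingHom.ker_isMaximal_of_surjective _ hsurj
  set x : PrimeSpectrum (MvPolynomial (Fin n) k) :=
    ⟨RingHom.ker (MvPolynomial.eval a), hmax.isPrime⟩ with hx
  obtain ⟨N, hN⟩ := Set.mem_iUnion.mp (hcover x hmax)
  rw [hIeq N] at hN
  have : f N ∈ x.asIdeal := hN (hfI N)
  exact ha N this
end

section
/- Let O be a noetherian local domain and p a prime ideal such that O/p is a discrete valuation ring with uniformizer (the image of) π ∈ O. Let O' be the ring ∑_{i≥0} π^{-i} p^i inside Frac(O) (the affine blow-up algebra), and let p₁ be the ideal of O' generated by π^{-1}p. Then for each m ≥ 0 the map φ : π^{-m}(O/p) ⊗_{O/p} p^m/p^{m+1} → p₁^m/p₁^{m+1} sending π^{-m} ⊗ x to the class of π^{-m}x is a well-defined surjective O/p-linear map. -/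
set_option synthInstance.maxHeartbeats 800000
set_option maxHeartbeats 1600000

/-- The affine blow-up algebra `O' = ∑_{i≥0} π^{-i} p^i` inside `Frac(O)`,
realized as the `O`-subalgebra of `Frac(O)` generated by `π^{-1}p`. -/
noncomputable def blowupAlgebra (O : Type*) [CommRing O] [IsDomain O]
    (p : Ideal O) (π : O) : Subalgebra O (FractionRing O) :=
  Algebra.adjoin O {y : FractionRing O | ∃ x ∈ p,
    y * algebraMap O (FractionRing O) π = algebraMap O (FractionRing O) x}

/-- The ideal `p₁` of `O'` generated by `π^{-1}p`. -/
noncomputable def blowupIdeal (O : Type*) [CommRing O] [IsDomain O]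
    (p : Ideal O) (π : O) : Ideal (blowupAlgebra O p π) :=
  Ideal.span {a : blowupAlgebra O p π | ∃ x ∈ p,
    (a : FractionRing O) * algebraMap O (FractionRing O) π
      = algebraMap O (FractionRing O) x}

/-- The power `p₁^m`, viewed as an `O`-submodule of `Frac(O)`. -/
noncomputable def blowupIdealPow (O : Type*) [CommRing O] [IsDomain O]
    (p : Ideal O) (π : O) (m : ℕ) : Submodule O (FractionRing O) :=
  Submodule.map ((blowupAlgebra O p π).val.toLinearMap)
    (((blowupIdeal O p π) ^ m).restrictScalars O)

/-! Write `q = p₁`. For `x ∈ p` the element `π⁻¹x` lies in `q`, so products give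
`π^{-m} p^m ⊆ q^m`, and `π^{-m} p^{m+1} = π · π^{-(m+1)} p^{m+1} ⊆ q^{m+1}`.
For surjectivity: `O'` is generated as an `O`-algebra by elements of `q`, so `O' = O + q`.
Hence `q^m`, the `O'`-span of the `m`-fold products of generators (which lie in
`π^{-m} p^m`), is contained in their `O`-span plus `q · q^m = q^{m+1}`. -/

section IdealDecomposition

variable {R A : Type*} [CommSemiring R] [CommRing A] [Algebra R A]

theorem Ideal.exists_sub_algebraMap_mem_of_adjoin_eq_top {I : Ideal A} {s : Set A}
    (hs : s ⊆ I) (htop : Algebra.adjoin R s = ⊤) (a : A) :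
    ∃ r : R, a - algebraMap R A r ∈ I := by
  have ha : a ∈ Algebra.adjoin R s := htop ▸ Algebra.mem_top
  induction ha using Algebra.adjoin_induction with
  | mem x hx => exact ⟨0, by simpa using hs hx⟩
  | algebraMap r => exact ⟨r, by simp⟩
  | add x y _ _ hx hy =>
    obtain ⟨r, hr⟩ := hx
    obtain ⟨t, ht⟩ := hy
    exact ⟨r + t, by simpa only [map_add, add_sub_add_comm] using I.add_mem hr ht⟩
  | mul x y _ _ hx hy =>
    obtain ⟨r, hr⟩ := hx
    obtain ⟨t, ht⟩ := hy
    refine ⟨r * t, ?_⟩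
    have : x * y - algebraMap R A (r * t)
        = (x - algebraMap R A r) * y + algebraMap R A r * (y - algebraMap R A t) := by
      rw [map_mul]; ring
    rw [this]
    exact I.add_mem (I.mul_mem_right _ hr) (I.mul_mem_left _ ht)

theorem Ideal.restrictScalars_span_le_span_sup_mul {I : Ideal A}
    (hI : ∀ a : A, ∃ r : R, a - algebraMap R A r ∈ I) (T : Set A) :
    (Ideal.span T).restrictScalars R
      ≤ Submodule.span R T ⊔ (I * Ideal.span T).restrictScalars R := by
  intro a ha
  rw [Submodule.restrictScalars_mem] at ha
  induction ha using Submodule.span_induction with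
  | mem x hx => exact Submodule.mem_sup_left (Submodule.subset_span hx)
  | zero => exact zero_mem _
  | add x y _ _ hx hy => exact add_mem hx hy
  | smul b x hx ihx =>
    obtain ⟨r, hr⟩ := hI b
    have : b • x = r • x + (b - algebraMap R A r) * x := by
      rw [Algebra.smul_def r x, smul_eq_mul]; ring
    rw [this]
    exact add_mem (Submodule.smul_mem _ r ihx)
      (Submodule.mem_sup_right (Ideal.mul_mem_mul hr hx))

end IdealDecomposition

namespace Blowup

open scoped Pointwise

variable {O : Type*} [CommRing O] [IsDomain O] (p : Ideal O) (π : O)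

def generators : Set (blowupAlgebra O p π) :=
  {a | ∃ x ∈ p, (a : FractionRing O) * algebraMap O (FractionRing O) π
      = algebraMap O (FractionRing O) x}

theorem blowupIdeal_eq_span : blowupIdeal O p π = Ideal.span (generators p π) := rfl

theorem adjoin_generators : Algebra.adjoin O (generators p π) = ⊤ :=
  Algebra.adjoin_adjoin_coe_preimage

theorem exists_sub_algebraMap_mem_blowupIdeal (a : blowupAlgebra O p π) :
    ∃ c : O, a - algebraMap O _ c ∈ blowupIdeal O p π :=
  Ideal.exists_sub_algebraMap_mem_of_adjoin_eq_top Ideal.subset_span (adjoin_generators p π) a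

/-- `π^{-n} p^n`, as an `O`-submodule of `Frac O`. -/
noncomputable def scaledPow (n : ℕ) : Submodule O (FractionRing O) :=
  Submodule.map (LinearMap.mulLeft O ((algebraMap O (FractionRing O) π)⁻¹ ^ n)
    ∘ₗ Algebra.linearMap O (FractionRing O)) (p ^ n)

variable {p π}

theorem mem_scaledPow {n : ℕ} {y : FractionRing O} :
    y ∈ scaledPow p π n ↔ ∃ x ∈ p ^ n,
      (algebraMap O (FractionRing O) π)⁻¹ ^ n * algebraMap O (FractionRing O) x = y := by
  simp [scaledPow]

theorem mul_mem_scaledPow {m n : ℕ} {y z : FractionRing O} (hy : y ∈ scaledPow p π m)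
    (hz : z ∈ scaledPow p π n) : y * z ∈ scaledPow p π (m + n) := by
  obtain ⟨x, hx, rfl⟩ := mem_scaledPow.mp hy
  obtain ⟨x', hx', rfl⟩ := mem_scaledPow.mp hz
  exact mem_scaledPow.mpr
    ⟨x * x', pow_add p m n ▸ Ideal.mul_mem_mul hx hx', by rw [pow_add, map_mul]; ring⟩

theorem mem_blowupIdealPow {n : ℕ} {y : FractionRing O} :
    y ∈ blowupIdealPow O p π n ↔
      ∃ a ∈ blowupIdeal O p π ^ n, (a : FractionRing O) = y := by
  simp [blowupIdealPow]

theorem mul_mem_blowupIdealPow {m n : ℕ} {y z : FractionRing O}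
    (hy : y ∈ blowupIdealPow O p π m) (hz : z ∈ blowupIdealPow O p π n) :
    y * z ∈ blowupIdealPow O p π (m + n) := by
  obtain ⟨a, ha, rfl⟩ := mem_blowupIdealPow.mp hy
  obtain ⟨b, hb, rfl⟩ := mem_blowupIdealPow.mp hz
  exact mem_blowupIdealPow.mpr
    ⟨a * b, pow_add (blowupIdeal O p π) m n ▸ Ideal.mul_mem_mul ha hb, rfl⟩

variable (hπ : algebraMap O (FractionRing O) π ≠ 0)
include hπ

theorem coe_mem_scaledPow_one {a : blowupAlgebra O p π} (ha : a ∈ generators p π) :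
    (a : FractionRing O) ∈ scaledPow p π 1 := by
  obtain ⟨x, hx, hax⟩ := ha
  refine mem_scaledPow.mpr ⟨x, by rwa [pow_one], ?_⟩
  rw [← hax]; field_simp

theorem coe_mem_scaledPow {n : ℕ} {a : blowupAlgebra O p π} (ha : a ∈ generators p π ^ n) :
    (a : FractionRing O) ∈ scaledPow p π n := by
  induction n generalizing a with
  | zero =>
    rw [pow_zero, Set.mem_one] at ha
    exact mem_scaledPow.mpr ⟨1, by simp, by simp [ha]⟩
  | succ n ih =>
    obtain ⟨b, hb, c, hc, rfl⟩ := Set.mem_mul.mp (pow_succ (generators p π) n ▸ ha)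
    exact mul_mem_scaledPow (ih hb) (coe_mem_scaledPow_one hπ hc)

theorem inv_mul_mem_blowupIdealPow_one {x : O} (hx : x ∈ p) :
    (algebraMap O (FractionRing O) π)⁻¹ * algebraMap O (FractionRing O) x
      ∈ blowupIdealPow O p π 1 := by
  have hgen : ((algebraMap O (FractionRing O) π)⁻¹ * algebraMap O (FractionRing O) x)
      * algebraMap O (FractionRing O) π = algebraMap O (FractionRing O) x := by
    field_simp
  refine mem_blowupIdealPow.mpr ⟨⟨_, Algebra.subset_adjoin ⟨x, hx, hgen⟩⟩, ?_, rfl⟩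
  rw [pow_one]
  exact Ideal.subset_span ⟨x, hx, hgen⟩

theorem inv_pow_mul_mem_blowupIdealPow {n : ℕ} {x : O} (hx : x ∈ p ^ n) :
    (algebraMap O (FractionRing O) π)⁻¹ ^ n * algebraMap O (FractionRing O) x
      ∈ blowupIdealPow O p π n := by
  induction n generalizing x with
  | zero =>
    simpa using mem_blowupIdealPow.mpr ⟨algebraMap O (blowupAlgebra O p π) x, by simp, rfl⟩
  | succ n ih =>
    rw [pow_succ] at hx
    refine Submodule.mul_induction_on hx (fun a ha b hb => ?_) (fun y z hy hz => ?_)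
    · have := mul_mem_blowupIdealPow (ih ha) (inv_mul_mem_blowupIdealPow_one hπ hb)
      convert this using 1
      rw [map_mul, pow_succ]; ring
    · rw [map_add, mul_add]
      exact add_mem hy hz

theorem blowupIdealPow_le_scaledPow_sup (n : ℕ) :
    blowupIdealPow O p π n ≤ scaledPow p π n ⊔ blowupIdealPow O p π (n + 1) := by
  intro y hy
  obtain ⟨a, ha, rfl⟩ := mem_blowupIdealPow.mp hy
  rw [blowupIdeal_eq_span, Submodule.span_pow] at ha
  obtain ⟨b, hb, c, hc, rfl⟩ := Submodule.mem_sup.mp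
    (Ideal.restrictScalars_span_le_span_sup_mul (exists_sub_algebraMap_mem_blowupIdeal p π) _ ha)
  refine Submodule.add_mem_sup ?_ (mem_blowupIdealPow.mpr ⟨c, ?_, rfl⟩)
  · exact Submodule.span_induction (fun a ha => coe_mem_scaledPow hπ ha) (zero_mem _)
      (fun _ _ _ _ => add_mem) (fun r _ _ h => Submodule.smul_mem _ r h) hb
  · rwa [pow_succ', blowupIdeal_eq_span, Submodule.span_pow]

end Blowup

theorem blowup_phi_welldefined_surjective_general
    (O : Type*) [CommRing O] [IsDomain O]
    (p : Ideal O)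
    (π : O) (hπ : Irreducible (Ideal.Quotient.mk p π)) (m : ℕ) :
    (∀ x ∈ p ^ m,
      (algebraMap O (FractionRing O) π)⁻¹ ^ m * algebraMap O (FractionRing O) x
        ∈ blowupIdealPow O p π m) ∧
    (∀ x ∈ p ^ (m + 1),
      (algebraMap O (FractionRing O) π)⁻¹ ^ m * algebraMap O (FractionRing O) x
        ∈ blowupIdealPow O p π (m + 1)) ∧
    (∀ y ∈ blowupIdealPow O p π m, ∃ x ∈ p ^ m,
      (algebraMap O (FractionRing O) π)⁻¹ ^ m * algebraMap O (FractionRing O) x - y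
        ∈ blowupIdealPow O p π (m + 1)) := by
  have hπ0 : algebraMap O (FractionRing O) π ≠ 0 := by
    refine (map_ne_zero_iff _ (IsFractionRing.injective O _)).mpr fun h => hπ.ne_zero ?_
    rw [h, map_zero]
  refine ⟨fun x hx => Blowup.inv_pow_mul_mem_blowupIdealPow hπ0 hx, fun x hx => ?_,
    fun y hy => ?_⟩
  · convert Submodule.smul_mem _ π (Blowup.inv_pow_mul_mem_blowupIdealPow hπ0 hx) using 1
    rw [Algebra.smul_def, pow_succ]
    field_simp
  · obtain ⟨z, hz, w, hw, rfl⟩ :=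
      Submodule.mem_sup.mp (Blowup.blowupIdealPow_le_scaledPow_sup hπ0 m hy)
    obtain ⟨x, hx, rfl⟩ := Blowup.mem_scaledPow.mp hz
    exact ⟨x, hx, by simpa using neg_mem hw⟩

/-- Let `O` be a noetherian local domain and `p` a prime such that `O/p` is a
DVR with uniformizer the image of `π`.  Then, for each `m`, the assignment
`π^{-m} ⊗ x ↦ class of π^{-m}x` gives a well-defined surjective `O/p`-linear
map `φ : π^{-m}(O/p) ⊗ p^m/p^{m+1} → p₁^m/p₁^{m+1}`.  Concretely:
`π^{-m}x` lands in `p₁^m` for `x ∈ p^m`, the map kills `p^{m+1}`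
(well-definedness), and it is surjective modulo `p₁^{m+1}`. -/
theorem blowup_phi_welldefined_surjective
    (O : Type*) [CommRing O] [IsDomain O] [IsNoetherianRing O] [IsLocalRing O]
    (p : Ideal O) [p.IsPrime] [IsDiscreteValuationRing (O ⧸ p)]
    (π : O) (hπ : Irreducible (Ideal.Quotient.mk p π)) (m : ℕ) :
    (∀ x ∈ p ^ m,
      (algebraMap O (FractionRing O) π)⁻¹ ^ m * algebraMap O (FractionRing O) x
        ∈ blowupIdealPow O p π m) ∧
    (∀ x ∈ p ^ (m + 1),
      (algebraMap O (FractionRing O) π)⁻¹ ^ m * algebraMap O (FractionRing O) x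
        ∈ blowupIdealPow O p π (m + 1)) ∧
    (∀ y ∈ blowupIdealPow O p π m, ∃ x ∈ p ^ m,
      (algebraMap O (FractionRing O) π)⁻¹ ^ m * algebraMap O (FractionRing O) x - y
        ∈ blowupIdealPow O p π (m + 1)) :=
  blowup_phi_welldefined_surjective_general O p π hπ m
end

section
/- Let O be a noetherian local domain and p a prime ideal such that O/p is a discrete valuation ring with uniformizer π. For each m let e_m ≥ 0 be the smallest integer such that π^{e_m} kills the torsion submodule of p^m/p^{m+1} as O/p-module. Then the sequence (e_m) is bounded. -/
/-!
The Rees algebra `R = ⊕ pᵐ Xᵐ` of `p` is noetherian, and the associated graded ring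
`⊕ pᵐ/pᵐ⁺¹` is its quotient by an ideal `K`. The ascending chain of ideals `(K : πⁿ)` of `R`
stabilises at some `n = B`, so `π^B` kills every element of `R/K` killed by some power of `π`;
applied to the homogeneous elements `x Xᵐ` this bounds the exponents `e_m` by `B`.
-/

open Polynomial

theorem IsNoetherian.exists_pow_smul_mem_of_exists_pow_smul_mem {R M : Type*} [CommRing R]
    [AddCommGroup M] [Module R M] [IsNoetherian R M] (N : Submodule R M) (a : R) :
    ∃ B : ℕ, ∀ x : M, (∃ n : ℕ, a ^ n • x ∈ N) → a ^ B • x ∈ N := by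
  let chain : ℕ →o Submodule R M :=
    ⟨fun n => N.comap (a ^ n • LinearMap.id), fun n k hnk x hx => by
      simpa [← pow_sub_mul_pow a hnk, mul_smul] using N.smul_mem (a ^ (k - n)) hx⟩
  obtain ⟨B, hB⟩ := monotone_stabilizes_iff_noetherian.mpr ‹_› chain
  refine ⟨B, fun x ⟨n, hn⟩ => ?_⟩
  have : x ∈ chain (max B n) := chain.monotone (le_max_right B n) (show a ^ n • x ∈ N from hn)
  rw [← hB _ (le_max_left B n)] at this
  exact this

section ReesAlgebra

variable {O : Type*} [CommRing O] (p : Ideal O)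

/-- The kernel of the projection of the Rees algebra `⊕ pᵏ Xᵏ` onto the associated graded ring
`⊕ pᵏ/pᵏ⁺¹`. -/
def reesAlgebraGradedKer : Ideal (reesAlgebra p) where
  carrier := {f | ∀ k, (f : O[X]).coeff k ∈ p ^ (k + 1)}
  add_mem' hf hg k := by
    rw [Subalgebra.coe_add, coeff_add]
    exact add_mem (hf k) (hg k)
  zero_mem' _ := by simp
  smul_mem' a f hf k := by
    rw [smul_eq_mul, Subalgebra.coe_mul, coeff_mul]
    refine Ideal.sum_mem _ fun ij hij => ?_
    rw [← Finset.HasAntidiagonal.mem_antidiagonal.mp hij, add_assoc, pow_add]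
    exact Ideal.mul_mem_mul (a.2 ij.1) (hf ij.2)

theorem mem_reesAlgebraGradedKer_iff_of_coe_eq_monomial {f : reesAlgebra p} {m : ℕ} {x : O}
    (hf : (f : O[X]) = monomial m x) : f ∈ reesAlgebraGradedKer p ↔ x ∈ p ^ (m + 1) := by
  refine ⟨fun h => by simpa [hf] using h m, fun hx k => ?_⟩
  rw [hf, coeff_monomial]
  split_ifs with h
  · exact h ▸ hx
  · exact zero_mem _

end ReesAlgebra

theorem torsion_exponents_bounded_general
    (O : Type*) [CommRing O] [IsNoetherianRing O]
    (p : Ideal O)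
    (π : O) :
    ∃ B : ℕ, ∀ m : ℕ, ∀ x ∈ p ^ m,
      (∃ N : ℕ, π ^ N * x ∈ p ^ (m + 1)) → π ^ B * x ∈ p ^ (m + 1) := by
  obtain ⟨B, hB⟩ := IsNoetherian.exists_pow_smul_mem_of_exists_pow_smul_mem
    (reesAlgebraGradedKer p) (algebraMap O (reesAlgebra p) π)
  refine ⟨B, fun m x hx ⟨N, hN⟩ => ?_⟩
  let f : reesAlgebra p := ⟨monomial m x, reesAlgebra.monomial_mem.mpr hx⟩
  have hmem (k : ℕ) : algebraMap O (reesAlgebra p) π ^ k • f ∈ reesAlgebraGradedKer p ↔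
      π ^ k * x ∈ p ^ (m + 1) :=
    mem_reesAlgebraGradedKer_iff_of_coe_eq_monomial p <| by
      simp only [smul_eq_mul, Subalgebra.coe_mul, Subalgebra.coe_pow, Subalgebra.coe_algebraMap,
        algebraMap_eq, ← C_pow, C_mul_monomial, f]
  exact (hmem B).mp (hB f ⟨N, (hmem N).mpr hN⟩)

/-- Let `O` be a noetherian local domain and `p` a prime ideal such that `O/p`
is a discrete valuation ring with uniformizer (the image of) `π`.  For each `m`
let `e_m` be the smallest integer such that `π^{e_m}` kills the torsion
submodule of `p^m/p^{m+1}`.  Then the sequence `(e_m)` is bounded: there is a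
single power `π^B` killing the torsion submodule of `p^m/p^{m+1}` for all `m`. -/
theorem torsion_exponents_bounded
    (O : Type*) [CommRing O] [IsDomain O] [IsNoetherianRing O] [IsLocalRing O]
    (p : Ideal O) [p.IsPrime] [IsDiscreteValuationRing (O ⧸ p)]
    (π : O) (hπ : Irreducible (Ideal.Quotient.mk p π)) :
    ∃ B : ℕ, ∀ m : ℕ, ∀ x ∈ p ^ m,
      (∃ N : ℕ, π ^ N * x ∈ p ^ (m + 1)) → π ^ B * x ∈ p ^ (m + 1) :=
  torsion_exponents_bounded_general O p π
end

section
/- Let O'/p' be a DVR quotient situation obtained by blowing up: with O noetherian local domain, p prime, O/p a DVR with uniformizer π, O' = ∑_{i≥0} π^{-i}p^i localized at a suitable maximal ideal, p₁ the ideal generated by π^{-1}p — then O'/p₁ ≅ O/p; in particular blowing up Spec O along V(p) induces an isomorphism on the curve C = Spec O/p when O/p is a DVR. -/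
/-!
Every element of `O' = O[π⁻¹p]` is congruent modulo `p₁` to an element of `O`, since the
generators `π⁻¹x` of `O'` lie in `p₁`; this gives surjectivity. For injectivity, an element
of `p₁` becomes an element of `p` after multiplication by a power of `π`, so an `a ∈ O`
lying in `p₁` satisfies `a πᴺ ∈ p`, hence `a ∈ p` because `p` is prime and `π ∉ p`.
-/

set_option synthInstance.maxHeartbeats 800000
set_option maxHeartbeats 1600000

section Blowup

variable {O : Type*} [CommRing O] [IsDomain O] (p : Ideal O) (π : O)

local notation "ι" => algebraMap O (FractionRing O)

theorem exists_mul_pow_eq_algebraMap_of_mem_blowupAlgebra {b : FractionRing O}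
    (hb : b ∈ blowupAlgebra O p π) : ∃ (N : ℕ) (c : O), b * ι π ^ N = ι c := by
  induction hb using Algebra.adjoin_induction with
  | mem x hx =>
    obtain ⟨c, -, hc⟩ := hx
    exact ⟨1, c, by rwa [pow_one]⟩
  | algebraMap r => exact ⟨0, r, by rw [pow_zero, mul_one]⟩
  | add x y _ _ ihx ihy =>
    obtain ⟨N₁, c₁, h₁⟩ := ihx
    obtain ⟨N₂, c₂, h₂⟩ := ihy
    refine ⟨N₁ + N₂, c₁ * π ^ N₂ + c₂ * π ^ N₁, ?_⟩
    calc (x + y) * ι π ^ (N₁ + N₂)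
        = x * ι π ^ N₁ * ι π ^ N₂ + y * ι π ^ N₂ * ι π ^ N₁ := by ring
      _ = ι (c₁ * π ^ N₂ + c₂ * π ^ N₁) := by rw [h₁, h₂]; simp
  | mul x y _ _ ihx ihy =>
    obtain ⟨N₁, c₁, h₁⟩ := ihx
    obtain ⟨N₂, c₂, h₂⟩ := ihy
    refine ⟨N₁ + N₂, c₁ * c₂, ?_⟩
    calc x * y * ι π ^ (N₁ + N₂) = x * ι π ^ N₁ * (y * ι π ^ N₂) := by ring
      _ = ι (c₁ * c₂) := by rw [h₁, h₂, map_mul]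

theorem exists_mul_pow_eq_algebraMap_mem_of_mem_blowupIdeal {b : blowupAlgebra O p π}
    (hb : b ∈ blowupIdeal O p π) : ∃ N : ℕ, ∃ c ∈ p, (b : FractionRing O) * ι π ^ N = ι c := by
  induction hb using Submodule.span_induction with
  | mem x hx =>
    obtain ⟨c, hcp, hc⟩ := hx
    exact ⟨1, c, hcp, by rwa [pow_one]⟩
  | zero => exact ⟨0, 0, p.zero_mem, by simp⟩
  | add x y _ _ ihx ihy =>
    obtain ⟨N₁, c₁, hc₁, h₁⟩ := ihx
    obtain ⟨N₂, c₂, hc₂, h₂⟩ := ihy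
    refine ⟨N₁ + N₂, c₁ * π ^ N₂ + c₂ * π ^ N₁,
      p.add_mem (p.mul_mem_right _ hc₁) (p.mul_mem_right _ hc₂), ?_⟩
    calc ((x + y : blowupAlgebra O p π) : FractionRing O) * ι π ^ (N₁ + N₂)
        = x * ι π ^ N₁ * ι π ^ N₂ + y * ι π ^ N₂ * ι π ^ N₁ := by push_cast; ring
      _ = ι (c₁ * π ^ N₂ + c₂ * π ^ N₁) := by rw [h₁, h₂]; simp
  | smul a x _ ihx =>
    obtain ⟨N₁, c₁, hc₁, h₁⟩ := ihx
    obtain ⟨N₂, c₂, h₂⟩ := exists_mul_pow_eq_algebraMap_of_mem_blowupAlgebra p π a.2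
    refine ⟨N₂ + N₁, c₂ * c₁, p.mul_mem_left _ hc₁, ?_⟩
    calc ((a • x : blowupAlgebra O p π) : FractionRing O) * ι π ^ (N₂ + N₁)
        = a * ι π ^ N₂ * (x * ι π ^ N₁) := by push_cast [smul_eq_mul]; ring
      _ = ι (c₂ * c₁) := by rw [h₁, h₂, map_mul]

theorem comap_blowupIdeal_le [p.IsPrime] (hπ : π ∉ p) :
    (blowupIdeal O p π).comap (algebraMap O (blowupAlgebra O p π)) ≤ p := by
  intro a ha
  obtain ⟨N, c, hcp, hc⟩ := exists_mul_pow_eq_algebraMap_mem_of_mem_blowupIdeal p π ha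
  have hc' : a * π ^ N = c := IsFractionRing.injective O (FractionRing O) (by simpa using hc)
  exact (Ideal.IsPrime.mem_or_mem ‹_› (hc' ▸ hcp)).resolve_right
    fun h ↦ hπ (Ideal.IsPrime.mem_of_pow_mem ‹_› N h)

theorem algebraMap_quotient_blowupIdeal_surjective :
    Function.Surjective (algebraMap O (blowupAlgebra O p π ⧸ blowupIdeal O p π)) := by
  suffices ∀ b (hb : b ∈ blowupAlgebra O p π),
      Ideal.Quotient.mk (blowupIdeal O p π) ⟨b, hb⟩ ∈ (⊥ : Subalgebra O _) by
    intro z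
    obtain ⟨⟨b, hb⟩, rfl⟩ := Ideal.Quotient.mk_surjective z
    exact Algebra.mem_bot.1 (this b hb)
  intro b hb
  induction hb using Algebra.adjoin_induction with
  | mem x hx =>
    have : (⟨x, Algebra.subset_adjoin hx⟩ : blowupAlgebra O p π) ∈ blowupIdeal O p π := Ideal.subset_span hx
    rw [Ideal.Quotient.eq_zero_iff_mem.2 this]
    exact zero_mem _
  | algebraMap r => exact Subalgebra.algebraMap_mem _ r
  | add x y _ _ ihx ihy => exact add_mem ihx ihy
  | mul x y _ _ ihx ihy => exact mul_mem ihx ihy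

end Blowup

theorem blowup_quotient_iso_general
    (O : Type*) [CommRing O] [IsDomain O]
    (p : Ideal O) [p.IsPrime]
    (π : O) (hπ : Irreducible (Ideal.Quotient.mk p π))
    (h : p ≤ (blowupIdeal O p π).comap (algebraMap O (blowupAlgebra O p π))) :
    Function.Bijective
      (Ideal.quotientMap (blowupIdeal O p π) (algebraMap O (blowupAlgebra O p π)) h) := by
  have hπp : π ∉ p := fun hmem ↦ hπ.ne_zero (Ideal.Quotient.eq_zero_iff_mem.2 hmem)
  refine ⟨Ideal.quotientMap_injective' (comap_blowupIdeal_le p π hπp), ?_⟩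
  refine Function.Surjective.of_comp (g := Ideal.Quotient.mk p) ?_
  rw [← RingHom.coe_comp, Ideal.quotientMap_comp_mk]
  exact algebraMap_quotient_blowupIdeal_surjective p π

/-- Let `O` be a noetherian local domain and `p` a prime ideal such that `O/p`
is a DVR with uniformizer the image of `π ∈ O`.  Then the ring map
`O/p → O'/p₁` induced by `O → O' = ∑ π^{-i}p^i`, `p₁ = (π^{-1}p)O'`, is an
isomorphism: blowing up `Spec O` along `V(p)` induces an isomorphism on the
curve `C = Spec O/p`. -/
theorem blowup_quotient_iso
    (O : Type*) [CommRing O] [IsDomain O] [IsNoetherianRing O] [IsLocalRing O]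
    (p : Ideal O) [p.IsPrime] [IsDiscreteValuationRing (O ⧸ p)]
    (π : O) (hπ : Irreducible (Ideal.Quotient.mk p π))
    (h : p ≤ (blowupIdeal O p π).comap (algebraMap O (blowupAlgebra O p π))) :
    Function.Bijective
      (Ideal.quotientMap (blowupIdeal O p π) (algebraMap O (blowupAlgebra O p π)) h) :=
  blowup_quotient_iso_general O p π hπ h
end

section
/- Let X be a smooth separated finite-type scheme over an algebraically closed field, U ⊆ X a dense open subset, and (X, X̄) a good partial compactification (X open in smooth X̄ with X̄ ∖ X a strict normal crossings divisor). Then there exists an open subset Ū ⊆ X̄ containing all generic points of X̄ ∖ X such that Ū ∩ X ⊆ U; in particular (U ∩ Ū, Ū) is a good partial compactification of an open subset of U and codim_{X̄}(X̄ ∖ (X ∪ Ū)) ≥ 2. -/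
open AlgebraicGeometry TopologicalSpace

/-!
Take `Ū = X̄ ∖ closure (X ∖ U)`. An irreducible closed `T ⊆ closure (X ∖ U)` disjoint from
`X ∖ U` lies strictly inside an irreducible closed `W ⊆ closure (X ∖ U)` that meets `X ∖ U`.
Since `W` misses the dense open `U`, it is not an irreducible component of the Noetherian space
`X̄`, so `T < W < M` for some `M` and `T` has codimension at least two. Hence no component of
`X̄ ∖ X`, being of codimension one, has its generic point in `closure (X ∖ U)`.
-/

namespace TopologicalSpace.IrreducibleCloseds

variable {α : Type*} [TopologicalSpace α] [NoetherianSpace α]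

theorem not_isMax_of_subset_compl_of_dense {U : Set α} (hUd : Dense U)
    (W : IrreducibleCloseds α) (hW : (W : Set α) ⊆ Uᶜ) : ¬ IsMax W := by
  intro hmax
  obtain ⟨M, hM, hWM⟩ :=
    exists_mem_irreducibleComponents_subset_of_isIrreducible _ W.isIrreducible
  have hMW : M ⊆ W :=
    hmax (show W ≤ ⟨M, hM.1, isClosed_of_mem_irreducibleComponents M hM⟩ from hWM)
  obtain ⟨o, ho, hne, hoM⟩ :=
    NoetherianSpace.exists_isOpen_nonempty_subset_irreducibleComponent M hM
  obtain ⟨x, hxo, hxU⟩ := hUd.inter_open_nonempty o ho hne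
  exact hW (hMW (hoM hxo)) hxU

theorem exists_lt_subset_closure_of_disjoint {A : Set α} (T : IrreducibleCloseds α)
    (hT : (T : Set α) ⊆ closure A) (hTA : Disjoint (T : Set α) A) :
    ∃ W : IrreducibleCloseds α, T < W ∧ (W : Set α) ⊆ closure A := by
  obtain ⟨S, hSf, hSc, hSi, hS⟩ :=
    NoetherianSpace.exists_finite_set_isClosed_irreducible (isClosed_closure (s := A))
  lift S to Finset (Set α) using hSf
  -- refining the cover to the pieces `closure (A ∩ t)` makes the piece containing `T` meet `A`
  have hcover : (T : Set α) ⊆ ⋃₀ ↑(S.image fun t ↦ closure (A ∩ t)) := by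
    have hA : A = ⋃ t ∈ (S : Set (Set α)), A ∩ t := by
      rw [← Set.inter_iUnion₂, ← Set.sUnion_eq_biUnion, ← hS]
      exact (Set.inter_eq_left.mpr subset_closure).symm
    rw [Finset.coe_image, Set.sUnion_image, ← S.finite_toSet.closure_biUnion, ← hA]
    exact hT
  obtain ⟨_, hmem, hTt⟩ := isIrreducible_iff_sUnion_isClosed.mp T.isIrreducible _
    (by simp [isClosed_closure]) hcover
  obtain ⟨t, ht, rfl⟩ := Finset.mem_image.mp hmem
  obtain ⟨a, haA, hat⟩ := closure_nonempty_iff.mp (T.isIrreducible.nonempty.mono hTt)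
  refine ⟨⟨t, hSi t ht, hSc t ht⟩, lt_of_le_of_ne ?_ ?_, hS ▸ Set.subset_sUnion_of_mem ht⟩
  · exact hTt.trans (closure_minimal Set.inter_subset_right (hSc t ht))
  · rintro rfl
    exact hTA.notMem_of_mem_right haA hat

theorem two_le_coheight_of_subset_closure_of_disjoint {U A : Set α} (hUo : IsOpen U)
    (hUd : Dense U) (hAU : Disjoint A U) (T : IrreducibleCloseds α)
    (hT : (T : Set α) ⊆ closure A) (hTA : Disjoint (T : Set α) A) :
    2 ≤ Order.coheight T := by
  obtain ⟨W, hTW, hWA⟩ := exists_lt_subset_closure_of_disjoint T hT hTA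
  have hWU : (W : Set α) ⊆ Uᶜ :=
    hWA.trans (closure_minimal hAU.subset_compl_right hUo.isClosed_compl)
  have hW : 1 ≤ Order.coheight W :=
    Order.one_le_iff_pos.mpr <| Order.coheight_pos.mpr <|
      not_isMax_of_subset_compl_of_dense hUd W hWU
  calc (2 : ℕ∞) = 1 + 1 := by norm_num
    _ ≤ Order.coheight W + 1 := by gcongr
    _ ≤ Order.coheight T := Order.coheight_add_one_le hTW

end TopologicalSpace.IrreducibleCloseds

theorem AlgebraicGeometry.isNoetherian_of_locallyOfFiniteType {X Y : Scheme} (f : X ⟶ Y)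
    [LocallyOfFiniteType f] [QuasiCompact f] [IsNoetherian Y] : IsNoetherian X where
  __ := LocallyOfFiniteType.isLocallyNoetherian f
  __ := QuasiCompact.compactSpace_of_compactSpace f

theorem good_partial_compactification_shrink_general
    (k : Type*) [Field k]
    (Xbar : Scheme) (f : Xbar ⟶ Spec (CommRingCat.of k))
    [LocallyOfFiniteType f] [QuasiCompact f]
    (X U : Xbar.Opens) (hU : Dense (U : Set Xbar))
    (hdiv : ∀ T : IrreducibleCloseds Xbar, (T : Set Xbar) ⊆ (X : Set Xbar)ᶜ →
      (∀ T' : IrreducibleCloseds Xbar, (T' : Set Xbar) ⊆ (X : Set Xbar)ᶜ →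
        T ≤ T' → T = T') →
      Order.coheight T = 1) :
    ∃ Ubar : Xbar.Opens,
      -- `Ū` contains all generic points of the components of `X̄ ∖ X`
      (∀ T : IrreducibleCloseds Xbar, (T : Set Xbar) ⊆ (X : Set Xbar)ᶜ →
        (∀ T' : IrreducibleCloseds Xbar, (T' : Set Xbar) ⊆ (X : Set Xbar)ᶜ →
          T ≤ T' → T = T') →
        ∀ η : Xbar, IsGenericPoint η (T : Set Xbar) → η ∈ Ubar) ∧
      -- `Ū ∩ X ⊆ U`
      ((Ubar : Set Xbar) ∩ (X : Set Xbar) ⊆ (U : Set Xbar)) ∧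
      -- `codim_{X̄}(X̄ ∖ (X ∪ Ū)) ≥ 2`
      (∀ T : IrreducibleCloseds Xbar,
        (T : Set Xbar) ⊆ ((X : Set Xbar) ∪ (Ubar : Set Xbar))ᶜ →
        2 ≤ Order.coheight T) := by
  have := isNoetherian_of_locallyOfFiniteType f
  set A : Set Xbar := (X : Set Xbar) \ U
  have hcodim (T : IrreducibleCloseds Xbar) (hTA : (T : Set Xbar) ⊆ closure A)
      (hTX : (T : Set Xbar) ⊆ (X : Set Xbar)ᶜ) : 2 ≤ Order.coheight T :=
    IrreducibleCloseds.two_le_coheight_of_subset_closure_of_disjoint U.isOpen hU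
      Set.disjoint_sdiff_left T hTA
      ((Set.subset_compl_iff_disjoint_right.mp hTX).mono_right Set.sdiff_subset)
  refine ⟨⟨(closure A)ᶜ, isClosed_closure.isOpen_compl⟩, ?_, ?_, ?_⟩
  · intro T hTX hTmax η hη hηA
    have hTA : (T : Set Xbar) ⊆ closure A :=
      hη ▸ closure_minimal (Set.singleton_subset_iff.mpr hηA) isClosed_closure
    have h2 := hcodim T hTA hTX
    rw [hdiv T hTX hTmax] at h2
    exact absurd h2 (by norm_num)
  · rintro x ⟨hxA, hxX⟩
    by_contra hxU
    exact hxA (subset_closure ⟨hxX, hxU⟩)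
  · intro T hT
    exact hcodim T (fun x hx ↦ not_not.mp fun h ↦ hT hx (Or.inr h))
      (fun x hx hxX ↦ hT hx (Or.inl hxX))

/-- Let `X̄` be a smooth separated finite-type scheme over an algebraically
closed field `k`, `X ⊆ X̄` open with complement (the support of a strict normal
crossings divisor, in particular) of pure codimension one, i.e. a good partial
compactification `(X, X̄)`, and let `U ⊆ X` be a dense open subset.  Then there
is an open `Ū ⊆ X̄` containing all generic points of `X̄ ∖ X` with
`Ū ∩ X ⊆ U`; in particular `(U ∩ Ū, Ū)` is a good partial compactification and
`codim_{X̄}(X̄ ∖ (X ∪ Ū)) ≥ 2`. -/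
theorem good_partial_compactification_shrink
    (k : Type*) [Field k] [IsAlgClosed k]
    (Xbar : Scheme) (f : Xbar ⟶ Spec (CommRingCat.of k))
    [Smooth f] [IsSeparated f] [LocallyOfFiniteType f] [QuasiCompact f]
    (X U : Xbar.Opens) (hUX : U ≤ X) (hU : Dense (U : Set Xbar))
    (hdiv : ∀ T : IrreducibleCloseds Xbar, (T : Set Xbar) ⊆ (X : Set Xbar)ᶜ →
      (∀ T' : IrreducibleCloseds Xbar, (T' : Set Xbar) ⊆ (X : Set Xbar)ᶜ →
        T ≤ T' → T = T') →
      Order.coheight T = 1) :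
    ∃ Ubar : Xbar.Opens,
      -- `Ū` contains all generic points of the components of `X̄ ∖ X`
      (∀ T : IrreducibleCloseds Xbar, (T : Set Xbar) ⊆ (X : Set Xbar)ᶜ →
        (∀ T' : IrreducibleCloseds Xbar, (T' : Set Xbar) ⊆ (X : Set Xbar)ᶜ →
          T ≤ T' → T = T') →
        ∀ η : Xbar, IsGenericPoint η (T : Set Xbar) → η ∈ Ubar) ∧
      -- `Ū ∩ X ⊆ U`
      ((Ubar : Set Xbar) ∩ (X : Set Xbar) ⊆ (U : Set Xbar)) ∧
      -- `codim_{X̄}(X̄ ∖ (X ∪ Ū)) ≥ 2`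
      (∀ T : IrreducibleCloseds Xbar,
        (T : Set Xbar) ⊆ ((X : Set Xbar) ∪ (Ubar : Set Xbar))ᶜ →
        2 ≤ Order.coheight T) :=
  good_partial_compactification_shrink_general k Xbar f X U hU hdiv
end

section
/- Let i' : Ȳ → X' be a morphism of integral separated finite-type k-schemes extending a closed immersion i : Y ↪ X, where Y ⊆ Ȳ is a dense open with one-dimensional complement with generic point η, and X ⊆ X' is open. Then i'(η) ∉ X: otherwise i'(η) would lie in the closure of i'(Y) inside X, forcing the discrete valuation on k(Y) corresponding to η to have two distinct centers on the separated scheme Y, a contradiction. -/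
/-!
Let `V = i'⁻¹(X)`. The dense open `Y` of the reduced scheme `V` is mapped onto the closed subset
`i(Y)` of `X`, so all of `V` lands in it and `i'|_V` factors through the closed immersion `i`,
giving a retraction `r : V → Y` of the inclusion `Y ⊆ V`. The maps `r` and `V ⊆ Ȳ` agree on the
dense open `Y` and after composing with `i'`, so by separatedness of `Ȳ` they agree; hence `V = Y`,
and `η ∉ Y` means `i'(η) ∉ X`.
-/

open AlgebraicGeometry CategoryTheory

namespace AlgebraicGeometry

lemma Scheme.Hom.ker_le_ker_of_range_subset_closure {X Y Z : Scheme} [IsReduced Y]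
    (f : X ⟶ Z) [QuasiCompact f] (g : Y ⟶ Z) (h : Set.range g ⊆ closure (Set.range f)) :
    f.ker ≤ g.ker := by
  refine Scheme.IdealSheafData.le_ofIdeals_iff.mpr fun U s hs => ?_
  rw [RingHom.mem_ker]
  refine eq_zero_of_basicOpen_eq_bot _ ?_
  rw [← Scheme.preimage_basicOpen, eq_bot_iff]
  intro y hy
  have hsupp : g y ∈ (f.ker.support : Set Z) := by
    rw [support_ker]; exact h ⟨y, rfl⟩
  exact (Scheme.mem_zeroLocus_iff _ _ _).mp
    (Scheme.IdealSheafData.mem_support_iff.mp hsupp U) s hs hy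

lemma Scheme.Hom.range_subset_closure_range_comp {X Y Z : Scheme} (j : X ⟶ Y) [IsDominant j]
    (g : Y ⟶ Z) : Set.range g ⊆ closure (Set.range (j ≫ g)) := by
  rw [comp_base, TopCat.coe_comp, Set.range_comp]
  exact g.continuous.range_subset_closure_image_dense j.denseRange

theorem Scheme.Hom.preimage_eq_of_isClosedImmersion_resLE {X Y S : Scheme} [IsReduced Y]
    (f : Y ⟶ X) (p : X ⟶ S) [IsSeparated (f ≫ p)] {U : X.Opens} {V : Y.Opens}
    (hV : Dense (V : Set Y)) (e : V ≤ f ⁻¹ᵁ U) [IsClosedImmersion (f.resLE U V e)] :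
    f ⁻¹ᵁ U = V := by
  set c := f.resLE U V e
  set j := Y.homOfLE e
  set ρ := f.resLE U (f ⁻¹ᵁ U) le_rfl
  have hjρ : j ≫ ρ = c := map_resLE f le_rfl e
  have : IsDominant j := Opens.isDominant_homOfLE hV e
  have hker : c.ker ≤ ρ.ker := c.ker_le_ker_of_range_subset_closure ρ
    (by rw [← hjρ]; exact j.range_subset_closure_range_comp ρ)
  set r := IsClosedImmersion.lift c ρ hker
  have hjr : j ≫ r = 𝟙 _ := by
    rw [← cancel_mono c, Category.assoc, IsClosedImmersion.lift_fac, hjρ, Category.id_comp]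
  have hr : r ≫ V.ι = (f ⁻¹ᵁ U).ι := by
    refine ext_of_isDominant_of_isSeparated (f ≫ p) ?_ j ?_
    · calc (r ≫ V.ι) ≫ f ≫ p = r ≫ c ≫ U.ι ≫ p := by
            rw [Category.assoc, resLE_comp_ι_assoc]
        _ = ρ ≫ U.ι ≫ p := IsClosedImmersion.lift_fac_assoc _ _ _ _
        _ = (f ⁻¹ᵁ U).ι ≫ f ≫ p := resLE_comp_ι_assoc _ _ _
    · rw [reassoc_of% hjr, Scheme.homOfLE_ι]
  refine le_antisymm (fun y hy => ?_) e
  obtain ⟨y', rfl⟩ : y ∈ Set.range (f ⁻¹ᵁ U).ι := by rwa [Scheme.Opens.range_ι]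
  rw [← hr, comp_apply]
  exact (r y').2

end AlgebraicGeometry

theorem image_of_generic_point_outside_general
    (k : Type*) [Field k]
    (Xbar Ybar : Scheme) [IsIntegral Ybar]
    (fX : Xbar ⟶ Spec (CommRingCat.of k))
    (fY : Ybar ⟶ Spec (CommRingCat.of k))
    [IsSeparated fY]
    (XO : Xbar.Opens)
    (YO : Ybar.Opens) (hYdense : Dense (YO : Set Ybar))
    (η : Ybar) (hη : IsGenericPoint η ((YO : Set Ybar)ᶜ))
    (i' : Ybar ⟶ Xbar) (hcomm : i' ≫ fX = fY)
    (e : YO ≤ i' ⁻¹ᵁ XO)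
    (hclosed : IsClosedImmersion (i'.resLE XO YO e)) :
    i'.base η ∉ XO := by
  subst hcomm
  have hpreimage : i' ⁻¹ᵁ XO = YO := i'.preimage_eq_of_isClosedImmersion_resLE fX hYdense e
  intro hηX
  have hηY : η ∈ i' ⁻¹ᵁ XO := hηX
  exact hη.mem (hpreimage ▸ hηY)

/-- Let `i' : Ȳ ⟶ X'` be a morphism of integral separated finite-type
`k`-schemes extending a closed immersion `i : Y ↪ X`, where `Y ⊆ Ȳ` is a dense
open subset whose (one-dimensional) complement is irreducible with generic
point `η`, `X ⊆ X'` is a dense open subset, `X'` is normal and proper over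
`k`.  Then `i'(η) ∉ X`: otherwise `i'(η)` would lie in the closure of `i'(Y)`
inside `X`, forcing the discrete valuation on `k(Y)` corresponding to `η` to
have two distinct centers on the separated scheme `Y`, a contradiction. -/
theorem image_of_generic_point_outside
    (k : Type*) [Field k] [IsAlgClosed k]
    (Xbar Ybar : Scheme) [IsIntegral Xbar] [IsIntegral Ybar]
    (fX : Xbar ⟶ Spec (CommRingCat.of k)) [IsProper fX]
    (fY : Ybar ⟶ Spec (CommRingCat.of k))
    [IsSeparated fY] [LocallyOfFiniteType fY] [QuasiCompact fY]
    (hXnormal : ∀ x : Xbar, IsIntegrallyClosed (Xbar.presheaf.stalk x))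
    (XO : Xbar.Opens) (hXdense : Dense (XO : Set Xbar))
    (YO : Ybar.Opens) (hYdense : Dense (YO : Set Ybar))
    (η : Ybar) (hη : IsGenericPoint η ((YO : Set Ybar)ᶜ))
    (i' : Ybar ⟶ Xbar) (hcomm : i' ≫ fX = fY)
    (e : YO ≤ i' ⁻¹ᵁ XO)
    (hclosed : IsClosedImmersion (i'.resLE XO YO e)) :
    i'.base η ∉ XO :=
  image_of_generic_point_outside_general k Xbar Ybar fX fY XO YO hYdense η hη i' hcomm e hclosed
end
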